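/- arXiv:2203.03229 — 3 statements merged into one kernel-verified Lean document; each statement's English description precedes it below -/
import Mathlib

section
/- Let G be a connected graph, let C ⊆ V(G) be such that G[C] is connected and there is a vertex v_C ∈ C with d_{G[C]}(v_C, w) ≤ k for every w ∈ C. If W ⊆ C satisfies |W| > k·s^k, then G[C] contains a subdivision of the star K_{1,s} with all its leaf vertices in W. -/
open SimpleGraph

/-- `G` contains, inside the vertex set `C`, a subdivision of the star `K_{1,s}` with all
its `s` leaves in `W`: a center `z` and `s` nontrivial paths from `z` to distinct vertices
of `W`, pairwise sharing only the center, all of whose vertices lie in `C`. -/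
def StarSubdivisionIn {V : Type*} (G : SimpleGraph V) (C W : Set V) (s : ℕ) : Prop :=
  ∃ z ∈ C, ∃ w : Fin s → V, Function.Injective w ∧ (∀ i, w i ∈ W) ∧ (∀ i, w i ≠ z) ∧
    ∃ p : (i : Fin s) → G.Walk z (w i),
      (∀ i, (p i).IsPath ∧ ∀ x ∈ (p i).support, x ∈ C) ∧
      (∀ i j, i ≠ j → ∀ x ∈ (p i).support, x ∈ (p j).support → x = z)

/-!
Take a breadth-first search tree of `G[C]` rooted at `v_C`; every vertex has depth at most `k`.
Induct on `k`, for leaves lying strictly below a vertex `z` and at most `k` levels deeper. If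
these leaves lie below at least `s` distinct children of `z`, the tree paths from `z` to one leaf
below each of `s` such children form the star, because tree paths from `z` through distinct
children meet only at `z`. Otherwise fewer than `s` children share more than `k·s^k` leaves, so
by pigeonhole one child `c` has more than `(k-1)·s^(k-1)` of them strictly below it, and the
induction hypothesis applies to `c`.
-/

theorem StarSubdivisionIn.mono {V : Type*} {G : SimpleGraph V} {C W W' : Set V} {s : ℕ}
    (h : StarSubdivisionIn G C W s) (hW : W ⊆ W') : StarSubdivisionIn G C W' s := by
  obtain ⟨z, hz, w, hinj, hwW, hwz, p, hp, hdisj⟩ := h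
  exact ⟨z, hz, w, hinj, fun i => hW (hwW i), hwz, p, hp, hdisj⟩

theorem StarSubdivisionIn.map {V V' : Type*} {G : SimpleGraph V} {G' : SimpleGraph V'}
    (f : G ↪g G') {C W : Set V} {s : ℕ} (h : StarSubdivisionIn G C W s) :
    StarSubdivisionIn G' (f '' C) (f '' W) s := by
  obtain ⟨z, hz, w, hinj, hwW, hwz, p, hp, hdisj⟩ := h
  refine ⟨f z, Set.mem_image_of_mem f hz, f ∘ w, f.injective.comp hinj,
    fun i => Set.mem_image_of_mem f (hwW i), fun i => f.injective.ne (hwz i),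
    fun i => (p i).map f.toHom, fun i => ⟨(hp i).1.map f.injective, ?_⟩, ?_⟩
  · intro x hx
    rw [Walk.support_map, List.mem_map] at hx
    obtain ⟨y, hy, rfl⟩ := hx
    exact Set.mem_image_of_mem f ((hp i).2 y hy)
  · intro i j hij x hxi hxj
    rw [Walk.support_map, List.mem_map] at hxi hxj
    obtain ⟨y, hyi, rfl⟩ := hxi
    obtain ⟨y', hyj, hyy'⟩ := hxj
    obtain rfl := f.injective hyy'
    simp [hdisj i j hij _ hyi hyj]

theorem Finset.exists_fin_injective_comp_of_le_card_image {α β : Type*} [DecidableEq β]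
    {f : α → β} {t : Finset α} {s : ℕ} (h : s ≤ (t.image f).card) :
    ∃ w : Fin s → α, (∀ i, w i ∈ t) ∧ Function.Injective (f ∘ w) := by
  obtain ⟨S, hS, hcard⟩ := Finset.exists_subset_card_eq h
  let e := S.equivFinOfCardEq hcard
  choose w hwt hwf using fun i => Finset.mem_image.1 (hS (e.symm i).2)
  refine ⟨w, hwt, fun i j hij => e.symm.injective (Subtype.ext ?_)⟩
  simpa [hwf] using hij

namespace SimpleGraph

variable {α : Type*} {H : SimpleGraph α}

theorem Connected.exists_adj_dist_add_one (hc : H.Connected) {r x : α} (hx : x ≠ r) :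
    ∃ y, H.Adj y x ∧ H.dist r y + 1 = H.dist r x := by
  obtain ⟨p, hp⟩ := hc.exists_walk_length_eq_dist x r
  cases p with
  | nil => exact absurd rfl hx
  | @cons _ y _ hxy q =>
    refine ⟨y, hxy.symm, le_antisymm ?_ ?_⟩
    · have := H.dist_le q
      rw [Walk.length_cons, dist_comm] at hp
      rw [dist_comm]
      omega
    · calc H.dist r x ≤ H.dist r y + H.dist y x := hc.dist_triangle
        _ = H.dist r y + 1 := by rw [dist_eq_one_iff_adj.2 hxy.symm]

structure BFSTree (H : SimpleGraph α) (r : α) where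
  parent : α → α
  parent_root : parent r = r
  adj_parent {x : α} : x ≠ r → H.Adj (parent x) x
  dist_parent {x : α} : x ≠ r → H.dist r (parent x) + 1 = H.dist r x

theorem Connected.nonempty_bfsTree (hc : H.Connected) (r : α) : Nonempty (H.BFSTree r) := by
  classical
  choose f hf using fun x (hx : x ≠ r) => hc.exists_adj_dist_add_one hx
  exact ⟨{ parent := fun x => if hx : x = r then r else f x hx
           parent_root := dif_pos rfl
           adj_parent := fun hx => by simpa [hx] using (hf _ hx).1
           dist_parent := fun hx => by simpa [hx] using (hf _ hx).2 }⟩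

namespace BFSTree

variable {r : α} (T : H.BFSTree r)

theorem dist_parent_eq (x : α) : H.dist r (T.parent x) = H.dist r x - 1 := by
  by_cases hx : x = r
  · subst hx
    simp [T.parent_root]
  · have := T.dist_parent hx
    omega

theorem dist_iterate_parent (n : ℕ) (x : α) :
    H.dist r (T.parent^[n] x) = H.dist r x - n := by
  induction n with
  | zero => rfl
  | succ n ih =>
    rw [Function.iterate_succ_apply', T.dist_parent_eq, ih]
    omega

theorem iterate_parent_ne_root {n : ℕ} {x : α} (hn : n < H.dist r x) :
    T.parent^[n] x ≠ r := fun h => by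
  have := T.dist_iterate_parent n x
  rw [h, dist_self] at this
  omega

-- The ancestor of `x` at depth `j`, provided `j ≤ H.dist r x`; otherwise `x` itself.
noncomputable def ancestorAt (j : ℕ) (x : α) : α :=
  T.parent^[H.dist r x - j] x

theorem dist_ancestorAt {j : ℕ} {x : α} (hj : j ≤ H.dist r x) :
    H.dist r (T.ancestorAt j x) = j := by
  rw [ancestorAt, dist_iterate_parent]
  omega

theorem ancestorAt_dist_self (x : α) : T.ancestorAt (H.dist r x) x = x := by
  simp [ancestorAt]

theorem ancestorAt_zero (x : α) : T.ancestorAt 0 x = r := by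
  by_contra h
  have := T.dist_parent h
  rw [T.dist_ancestorAt (Nat.zero_le _)] at this
  omega

theorem ancestorAt_iterate_parent {j m : ℕ} {x : α} (h : j + m ≤ H.dist r x) :
    T.ancestorAt j (T.parent^[m] x) = T.ancestorAt j x := by
  rw [ancestorAt, ancestorAt, dist_iterate_parent, ← Function.iterate_add_apply]
  congr 1
  omega

noncomputable def descent (x : α) : (n : ℕ) → n ≤ H.dist r x → H.Walk (T.parent^[n] x) x
  | 0, _ => Walk.nil
  | n + 1, hn => Walk.cons
      (by rw [Function.iterate_succ_apply']; exact T.adj_parent (T.iterate_parent_ne_root hn))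
      (descent x n (by omega))

theorem mem_support_descent {x y : α} {n : ℕ} (hn : n ≤ H.dist r x) :
    y ∈ (T.descent x n hn).support ↔ ∃ m ≤ n, T.parent^[m] x = y := by
  induction n with
  | zero => simp [descent, eq_comm]
  | succ n ih =>
    rw [descent, Walk.support_cons, List.mem_cons, ih, eq_comm]
    constructor
    · rintro (h | ⟨m, hm, h⟩)
      · exact ⟨n + 1, le_rfl, h⟩
      · exact ⟨m, by omega, h⟩
    · rintro ⟨m, hm, h⟩
      rcases Nat.lt_or_eq_of_le hm with hm | rfl
      · exact Or.inr ⟨m, by omega, h⟩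
      · exact Or.inl h

theorem isPath_descent (x : α) (n : ℕ) (hn : n ≤ H.dist r x) : (T.descent x n hn).IsPath := by
  induction n with
  | zero => exact Walk.IsPath.nil
  | succ n ih =>
    rw [descent, Walk.cons_isPath_iff, mem_support_descent]
    refine ⟨ih (by omega), fun ⟨m, hm, h⟩ => ?_⟩
    have := congrArg (H.dist r) h
    rw [dist_iterate_parent, dist_iterate_parent] at this
    omega

structure IsProperAncestor (z x : α) : Prop where
  dist_lt : H.dist r z < H.dist r x
  iterate_parent_eq : T.parent^[H.dist r x - H.dist r z] x = z

noncomputable def descendingPath {z x : α} (h : T.IsProperAncestor z x) : H.Walk z x :=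
  (T.descent x _ (Nat.sub_le _ _)).copy h.iterate_parent_eq rfl

theorem isPath_descendingPath {z x : α} (h : T.IsProperAncestor z x) :
    (T.descendingPath h).IsPath :=
  (Walk.isPath_copy _ _ _).2 (T.isPath_descent _ _ _)

theorem mem_support_descendingPath {z x y : α} (h : T.IsProperAncestor z x) :
    y ∈ (T.descendingPath h).support ↔
      ∃ m ≤ H.dist r x - H.dist r z, T.parent^[m] x = y := by
  rw [descendingPath, Walk.support_copy, mem_support_descent]

theorem isProperAncestor_root {x : α} (hx : x ≠ r) : T.IsProperAncestor r x := by
  refine ⟨?_, ?_⟩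
  · have := T.dist_parent hx
    rw [dist_self]
    omega
  · rw [dist_self]
    exact T.ancestorAt_zero x

namespace IsProperAncestor

variable {T}

theorem ancestorAt_succ {z x : α} (h : T.IsProperAncestor z x)
    (hx : T.ancestorAt (H.dist r z + 1) x ≠ x) :
    T.IsProperAncestor (T.ancestorAt (H.dist r z + 1) x) x := by
  have hle : H.dist r z + 1 ≤ H.dist r x := h.dist_lt
  have hd := T.dist_ancestorAt hle
  refine ⟨?_, by rw [hd]; rfl⟩
  rw [hd]
  exact hle.lt_of_ne fun heq => hx (by rw [heq, ancestorAt_dist_self])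

theorem ancestorAt_succ_iterate_parent {z x : α} (h : T.IsProperAncestor z x)
    {m : ℕ} (hm : m ≤ H.dist r x - H.dist r z) (hz : T.parent^[m] x ≠ z) :
    T.ancestorAt (H.dist r z + 1) (T.parent^[m] x) = T.ancestorAt (H.dist r z + 1) x := by
  have : m ≠ H.dist r x - H.dist r z := by
    rintro rfl
    exact hz h.iterate_parent_eq
  exact T.ancestorAt_iterate_parent (by have := h.dist_lt; omega)

end IsProperAncestor

theorem starSubdivisionIn_of_injective_ancestorAt {s : ℕ} {z : α} {w : Fin s → α}
    (hw : ∀ i, T.IsProperAncestor z (w i))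
    (hinj : Function.Injective (T.ancestorAt (H.dist r z + 1) ∘ w)) :
    StarSubdivisionIn H Set.univ (Set.range w) s := by
  refine ⟨z, trivial, w, hinj.of_comp, fun i => ⟨i, rfl⟩,
    fun i h => (hw i).dist_lt.ne' (congrArg _ h), fun i => T.descendingPath (hw i),
    fun i => ⟨T.isPath_descendingPath _, fun _ _ => trivial⟩, fun i j hij y hyi hyj => ?_⟩
  rw [mem_support_descendingPath] at hyi hyj
  obtain ⟨m, hm, rfl⟩ := hyi
  obtain ⟨m', hm', hmm'⟩ := hyj
  by_contra hz
  apply hij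
  apply hinj
  calc T.ancestorAt (H.dist r z + 1) (w i)
      = T.ancestorAt (H.dist r z + 1) (T.parent^[m] (w i)) :=
        ((hw i).ancestorAt_succ_iterate_parent hm hz).symm
    _ = T.ancestorAt (H.dist r z + 1) (w j) := by
        rw [← hmm']
        exact (hw j).ancestorAt_succ_iterate_parent hm' (hmm' ▸ hz)

theorem starSubdivisionIn_of_le_card_image [DecidableEq α] {s : ℕ} {z : α} {W : Finset α}
    (hW : ∀ w ∈ W, T.IsProperAncestor z w)
    (h : s ≤ (W.image (T.ancestorAt (H.dist r z + 1))).card) :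
    StarSubdivisionIn H Set.univ W s := by
  obtain ⟨w, hwW, hinj⟩ := Finset.exists_fin_injective_comp_of_le_card_image h
  exact (T.starSubdivisionIn_of_injective_ancestorAt (fun i => hW _ (hwW i)) hinj).mono
    (Set.range_subset_iff.2 hwW)

theorem starSubdivisionIn_of_card_le {s k : ℕ} (hk : 1 ≤ k) {z : α} {W : Finset α}
    (hW : ∀ w ∈ W, T.IsProperAncestor z w ∧ H.dist r w ≤ H.dist r z + k)
    (hcard : k * s ^ k ≤ W.card) : StarSubdivisionIn H Set.univ W s := by
  classical
  induction k, hk using Nat.le_induction generalizing z W with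
  | base =>
    have hchild : ∀ w ∈ W, T.ancestorAt (H.dist r z + 1) w = w := fun w hw => by
      obtain ⟨hzw, hdw⟩ := hW w hw
      rw [show H.dist r z + 1 = H.dist r w by have := hzw.dist_lt; omega, ancestorAt_dist_self]
    refine T.starSubdivisionIn_of_le_card_image (fun w hw => (hW w hw).1) ?_
    rw [Finset.image_congr hchild, Finset.image_id']
    simpa using hcard
  | succ k hk ih =>
    by_cases hmany : s ≤ (W.image (T.ancestorAt (H.dist r z + 1))).card
    · exact T.starSubdivisionIn_of_le_card_image (fun w hw => (hW w hw).1) hmany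
    have hfew : (W.image (T.ancestorAt (H.dist r z + 1))).card * (k * s ^ k) < W.card :=
      calc _ ≤ s * (k * s ^ k) := Nat.mul_le_mul_right _ (by omega)
        _ < (k + 1) * s ^ (k + 1) := by rw [pow_succ]; nlinarith [pow_pos (show 0 < s by omega) k]
        _ ≤ W.card := hcard
    obtain ⟨c, -, hfiber⟩ := Finset.exists_lt_card_fiber_of_mul_lt_card_of_maps_to
      (fun w hw => Finset.mem_image_of_mem _ hw) hfew
    set F := {w ∈ W | T.ancestorAt (H.dist r z + 1) w = c}
    refine (ih (z := c) (W := F.erase c) ?_ ?_).mono ?_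
    · intro w hw
      obtain ⟨hwc, hwF⟩ := Finset.mem_erase.1 hw
      obtain ⟨hwW, rfl⟩ := Finset.mem_filter.1 hwF
      obtain ⟨hzw, hdw⟩ := hW w hwW
      have hd := T.dist_ancestorAt (show H.dist r z + 1 ≤ H.dist r w from hzw.dist_lt)
      exact ⟨hzw.ancestorAt_succ (Ne.symm hwc), by omega⟩
    · have := Finset.pred_card_le_card_erase (s := F) (a := c)
      omega
    · exact Finset.coe_subset.2 ((Finset.erase_subset _ _).trans (Finset.filter_subset _ _))

end BFSTree

theorem Connected.starSubdivisionIn_of_dist_le (hc : H.Connected) {r : α} {s k : ℕ}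
    (hk : 1 ≤ k) (hr : ∀ x, H.dist r x ≤ k) (W : Set α) (hW : k * s ^ k < W.ncard) :
    StarSubdivisionIn H Set.univ W s := by
  classical
  obtain ⟨T⟩ := hc.nonempty_bfsTree r
  have hfin : W.Finite := Set.finite_of_ncard_pos (by omega)
  refine (T.starSubdivisionIn_of_card_le hk (z := r) (W := hfin.toFinset.erase r)
    (fun w hw => ⟨T.isProperAncestor_root (Finset.ne_of_mem_erase hw), ?_⟩) ?_).mono ?_
  · rw [dist_self, zero_add]
    exact hr w
  · have := Finset.pred_card_le_card_erase (s := hfin.toFinset) (a := r)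
    rw [← Set.ncard_eq_toFinset_card W hfin] at this
    omega
  · simp

end SimpleGraph

theorem star_subdivision_of_large_set_general {V : Type*}
    (G : SimpleGraph V) (k s : ℕ) (hk : 1 ≤ k)
    (C : Set V) (hconn : (G.induce C).Connected)
    (vC : V) (hvC : vC ∈ C)
    (hrad : ∀ w ∈ C, ∃ p : G.Walk vC w, p.length ≤ k ∧ ∀ x ∈ p.support, x ∈ C)
    (W : Set V) (hWC : W ⊆ C) (hW : k * s ^ k < W.ncard) :
    StarSubdivisionIn G C W s := by
  have hdist : ∀ x : C, (G.induce C).dist ⟨vC, hvC⟩ x ≤ k := by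
    rintro ⟨x, hx⟩
    obtain ⟨p, hpk, hpC⟩ := hrad x hx
    calc _ ≤ (p.induce C hpC).length := dist_le _
      _ = p.length := (Walk.length_map _ _).symm.trans (congrArg Walk.length (p.map_induce hpC))
      _ ≤ k := hpk
  have hcard : (Subtype.val ⁻¹' W : Set C).ncard = W.ncard :=
    Set.ncard_preimage_of_injective_subset_range Subtype.val_injective (by simpa using hWC)
  have hC : (Embedding.induce C : G.induce C ↪g G) '' Set.univ = C :=
    Set.image_univ.trans Subtype.range_coe
  have hW' : (Embedding.induce C : G.induce C ↪g G) '' (Subtype.val ⁻¹' W) = W :=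
    (Subtype.image_preimage_coe C W).trans (Set.inter_eq_right.2 hWC)
  have h := (hconn.starSubdivisionIn_of_dist_le hk hdist _ (hcard ▸ hW)).map (Embedding.induce C)
  rwa [hC, hW'] at h

/-- If `G[C]` is connected with a vertex `v_C` within distance `k` of every vertex of `C`
(inside `G[C]`), and `W ⊆ C` has more than `k·s^k` vertices, then `G[C]` contains a
subdivision of `K_{1,s}` with all leaves in `W`. -/
theorem star_subdivision_of_large_set {V : Type*} [Fintype V]
    (G : SimpleGraph V) (k s : ℕ) (hk : 1 ≤ k) (hs : 1 ≤ s)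
    (C : Set V) (hconn : (G.induce C).Connected)
    (vC : V) (hvC : vC ∈ C)
    (hrad : ∀ w ∈ C, ∃ p : G.Walk vC w, p.length ≤ k ∧ ∀ x ∈ p.support, x ∈ C)
    (W : Set V) (hWC : W ⊆ C) (hW : k * s ^ k < W.ncard) :
    StarSubdivisionIn G C W s :=
  star_subdivision_of_large_set_general G k s hk C hconn vC hvC hrad W hWC hW
end

section
/- Let G be a graph with no K_{2,t} minor (t ≥ 2), and let C, C′ be disjoint vertex subsets such that each of G[C] and G[C′] is connected and has a vertex within distance k (inside the induced subgraph) of all its other vertices. Then the number of edges of G with one endpoint in C and the other in C′ is at most k²·t^{2k·t^k}. -/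
open SimpleGraph

def SimpleGraph.HasMinor {V W : Type*} (G : SimpleGraph V) (H : SimpleGraph W) : Prop :=
  ∃ B : W → Set V,
    (∀ w, (B w).Nonempty) ∧
    (∀ w, (G.induce (B w)).Connected) ∧
    (Pairwise fun w₁ w₂ => Disjoint (B w₁) (B w₂)) ∧
    (∀ w₁ w₂, H.Adj w₁ w₂ → ∃ a ∈ B w₁, ∃ b ∈ B w₂, G.Adj a b)

/-!
A connected set `X` outside a set `D` of radius `k` is adjacent to at most `t ^ k` vertices of `D`.
Otherwise, in a breadth-first search tree of `D`, either the root has `t` children whose subtrees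
contain neighbours of `X`, or one subtree (of depth `k - 1`) contains more than `t ^ (k - 1)` of
them; descending, one finds a connected body and `t` disjoint connected legs, each adjacent to the
body and to `X`, which is a `K_{2,t}` minor. Taking `X = {b}` for `b ∈ C'` bounds the number of
neighbours of `b` in `C`, and taking `X = C` bounds the number of vertices of `C'` with a
neighbour in `C`, so there are at most `t ^ k * t ^ k` edges between `C` and `C'`.
-/

open Finset

namespace SimpleGraph

variable {V : Type*} {G : SimpleGraph V}

lemma connected_of_forall_exists_walk {v : V} {k : ℕ}
    (hv : ∀ w, ∃ p : G.Walk v w, p.length ≤ k) : G.Connected :=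
  (connected_iff_exists_forall_reachable G).mpr ⟨v, fun w => (hv w).elim fun p _ => p.reachable⟩

lemma connected_induce_of_forall_walk {s : Set V} {c : V} (hc : c ∈ s)
    (h : ∀ w ∈ s, ∃ p : G.Walk c w, ∀ x ∈ p.support, x ∈ s) :
    (G.induce s).Connected := by
  refine G.induce_connected_of_patches c hc fun {w} hw => ?_
  obtain ⟨p, hp⟩ := h w hw
  exact ⟨{x | x ∈ p.support}, hp, p.start_mem_support, p.end_mem_support,
    p.connected_induce_support.preconnected _ _⟩

lemma connected_induce_singleton (v : V) : (G.induce {v}).Connected :=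
  connected_induce_of_forall_walk rfl <| by
    rintro _ rfl
    exact ⟨.nil, by simp⟩

lemma Connected.induce_image {W : Type*} {G' : SimpleGraph W} (f : G ↪g G') {s : Set V}
    (h : (G.induce s).Connected) : (G'.induce (f '' s)).Connected := by
  let φ : G.induce s →g G'.induce (f '' s) :=
    { toFun x := ⟨f x, Set.mem_image_of_mem f x.2⟩, map_rel' := fun h => by simpa using h }
  refine h.map φ ?_
  rintro ⟨_, x, hx, rfl⟩
  exact ⟨⟨x, hx⟩, rfl⟩

lemma Walk.length_induce (s : Set V) {u w : V} (p : G.Walk u w)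
    (hp : ∀ x ∈ p.support, x ∈ s) : (p.induce s hp).length = p.length := by
  induction p with
  | nil => rfl
  | cons _ _ ih => simp [ih]

lemma Walk.dist_add_dist_le_length {u w x : V} (p : G.Walk u w) (hx : x ∈ p.support) :
    G.dist u x + G.dist x w ≤ p.length := by
  classical
  exact calc _ ≤ (p.takeUntil x hx).length + (p.dropUntil x hx).length :=
        add_le_add (dist_le _) (dist_le _)
    _ = p.length := by rw [← Walk.length_append, Walk.take_spec]

/-- The branch at `c` of a breadth-first search tree rooted at `v`; ties between neighbours of `v`
are broken by a well-order, which makes distinct branches disjoint. -/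
def geodesicBranch (G : SimpleGraph V) (v c : V) : Set V :=
  {w | G.Adj v c ∧ G.dist c w + 1 = G.dist v w ∧
    ∀ c', WellOrderingRel c' c → G.Adj v c' → G.dist c' w + 1 ≠ G.dist v w}

lemma exists_mem_geodesicBranch (hG : G.Connected) {v w : V} (hw : w ≠ v) :
    ∃ c, w ∈ G.geodesicBranch v c := by
  have wf := (WellOrderingRel.isWellOrder (α := V)).wf
  set cands := {c | G.Adj v c ∧ G.dist c w + 1 = G.dist v w}
  have hne : cands.Nonempty := by
    obtain ⟨p, hp⟩ := hG.exists_walk_length_eq_dist v w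
    cases p with
    | nil => exact absurd rfl hw
    | cons h q =>
      refine ⟨_, h, le_antisymm ?_ ?_⟩
      · have := dist_le q
        simp only [Walk.length_cons] at hp
        omega
      · calc G.dist v w ≤ G.dist v _ + G.dist _ w := hG.dist_triangle
          _ = _ := by rw [dist_eq_one_iff_adj.mpr h, add_comm]
  obtain ⟨hvc, hcw⟩ := wf.min_mem cands hne
  exact ⟨_, hvc, hcw, fun c' hc' hvc' hc'w => wf.not_lt_min cands ⟨hvc', hc'w⟩ hc'⟩

lemma disjoint_geodesicBranch {v c₁ c₂ : V} (h : c₁ ≠ c₂) :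
    Disjoint (G.geodesicBranch v c₁) (G.geodesicBranch v c₂) := by
  rw [Set.disjoint_left]
  rintro w ⟨h₁, d₁, min₁⟩ ⟨h₂, d₂, min₂⟩
  rcases trichotomous_of WellOrderingRel c₁ c₂ with h' | h' | h'
  · exact min₂ c₁ h' h₁ d₁
  · exact h h'
  · exact min₁ c₂ h' h₂ d₂

lemma root_notMem_geodesicBranch {v c : V} : v ∉ G.geodesicBranch v c :=
  fun h => by simpa using h.2.1

lemma exists_walk_of_mem_geodesicBranch (hG : G.Connected) {v c w : V}
    (hw : w ∈ G.geodesicBranch v c) :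
    ∃ p : G.Walk c w,
      p.length + 1 = G.dist v w ∧ ∀ x ∈ p.support, x ∈ G.geodesicBranch v c := by
  obtain ⟨hvc, hcw, hmin⟩ := hw
  obtain ⟨p, hp⟩ := hG.exists_walk_length_eq_dist c w
  refine ⟨p, hp ▸ hcw, fun x hx => ?_⟩
  have hsplit := p.dist_add_dist_le_length hx
  have hvx : G.dist v x ≤ G.dist v c + G.dist c x := hG.dist_triangle
  have hvw : G.dist v w ≤ G.dist v x + G.dist x w := hG.dist_triangle
  rw [dist_eq_one_iff_adj.mpr hvc] at hvx
  refine ⟨hvc, by omega, fun c' hc' hvc' hc'x => hmin c' hc' hvc' ?_⟩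
  have hc'w : G.dist c' w ≤ G.dist c' x + G.dist x w := hG.dist_triangle
  have hvw' : G.dist v w ≤ G.dist v c' + G.dist c' w := hG.dist_triangle
  rw [dist_eq_one_iff_adj.mpr hvc'] at hvw'
  omega

lemma self_mem_geodesicBranch (hG : G.Connected) {v c w : V} (hw : w ∈ G.geodesicBranch v c) :
    c ∈ G.geodesicBranch v c := by
  obtain ⟨p, -, hp⟩ := exists_walk_of_mem_geodesicBranch hG hw
  exact hp c p.start_mem_support

lemma connected_induce_geodesicBranch (hG : G.Connected) {v c w : V}
    (hw : w ∈ G.geodesicBranch v c) : (G.induce (G.geodesicBranch v c)).Connected :=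
  connected_induce_of_forall_walk (self_mem_geodesicBranch hG hw) fun _ hw' =>
    (exists_walk_of_mem_geodesicBranch hG hw').imp fun _ hp => hp.2

/-- A subdivided star `K_{1,t}` whose centre has been grown into the connected set `body`. -/
structure Spider (G : SimpleGraph V) (S : Set V) (t : ℕ) where
  body : Set V
  legs : Fin t → Set V
  connected_body : (G.induce body).Connected
  connected_legs : ∀ i, (G.induce (legs i)).Connected
  disjoint_body_legs : ∀ i, Disjoint body (legs i)
  pairwise_disjoint_legs : Pairwise fun i j => Disjoint (legs i) (legs j)
  exists_mem_legs : ∀ i, ∃ s ∈ S, s ∈ legs i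
  exists_adj_legs : ∀ i, ∃ x ∈ body, ∃ y ∈ legs i, G.Adj x y

variable {S : Set V} {t : ℕ}

def Spider.map {W : Type*} {G' : SimpleGraph W} {S' : Set W} (s : G.Spider S t) (f : G ↪g G')
    (hf : Set.MapsTo f S S') : G'.Spider S' t where
  body := f '' s.body
  legs i := f '' s.legs i
  connected_body := s.connected_body.induce_image f
  connected_legs i := (s.connected_legs i).induce_image f
  disjoint_body_legs i := (Set.disjoint_image_iff f.injective).mpr (s.disjoint_body_legs i)
  pairwise_disjoint_legs _ _ h :=
    (Set.disjoint_image_iff f.injective).mpr (s.pairwise_disjoint_legs h)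
  exists_mem_legs i := by
    obtain ⟨x, hxS, hx⟩ := s.exists_mem_legs i
    exact ⟨f x, hf hxS, Set.mem_image_of_mem f hx⟩
  exists_adj_legs i := by
    obtain ⟨x, hx, y, hy, hxy⟩ := s.exists_adj_legs i
    exact ⟨f x, Set.mem_image_of_mem f hx, f y, Set.mem_image_of_mem f hy,
      f.map_adj_iff.mpr hxy⟩

def Spider.ofGeodesicBranches (hG : G.Connected) (v : V) (c : Fin t → V)
    (hc : Function.Injective c) (hS : ∀ i, ∃ s ∈ S, s ∈ G.geodesicBranch v (c i)) :
    G.Spider S t where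
  body := {v}
  legs i := G.geodesicBranch v (c i)
  connected_body := connected_induce_singleton v
  connected_legs i := (hS i).elim fun _ hs => connected_induce_geodesicBranch hG hs.2
  disjoint_body_legs _ := Set.disjoint_singleton_left.mpr root_notMem_geodesicBranch
  pairwise_disjoint_legs _ _ h := disjoint_geodesicBranch (hc.ne h)
  exists_mem_legs := hS
  exists_adj_legs i := (hS i).elim fun _ hs =>
    ⟨v, rfl, c i, self_mem_geodesicBranch hG hs.2, hs.2.1⟩

lemma le_card_image_of_card_fiber_le {α β : Type*} [DecidableEq β] {s : Finset α}
    {f : α → β} {n t : ℕ} (hs : n * (t - 1) < #s) (hfib : ∀ b, #{x ∈ s | f x = b} ≤ n) :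
    t ≤ #(s.image f) := by
  have := lt_of_mul_lt_mul_left (hs.trans_le (card_le_mul_card_image s n fun b _ => hfib b))
  omega

open Classical in
lemma exists_injective_geodesicBranch (hG : G.Connected) {v : V} {S : Finset V}
    {n t : ℕ} (hfib : ∀ c, #{s ∈ S | s ∈ G.geodesicBranch v c} ≤ n)
    (hS : n * (t - 1) < #(S.erase v)) :
    ∃ c : Fin t → V,
      Function.Injective c ∧ ∀ i, ∃ s ∈ S, s ∈ G.geodesicBranch v (c i) := by
  have hroot : ∀ w, ∃ c, w ≠ v → w ∈ G.geodesicBranch v c := fun w => by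
    by_cases h : w = v
    · exact ⟨v, fun h' => absurd h h'⟩
    · exact (exists_mem_geodesicBranch hG h).imp fun _ hc _ => hc
  choose root hroot using hroot
  set T := (S.erase v).image root
  have hT : t ≤ #T := le_card_image_of_card_fiber_le hS fun c =>
    (card_le_card fun s hs => by
      simp only [mem_filter, mem_erase] at hs ⊢
      exact ⟨hs.1.2, hs.2 ▸ hroot s hs.1.1⟩).trans (hfib c)
  obtain ⟨e⟩ := Function.Embedding.nonempty_of_card_le (α := Fin t) (β := T)
    (by simpa using hT)
  refine ⟨Subtype.val ∘ e, Subtype.val_injective.comp e.injective, fun i => ?_⟩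
  obtain ⟨s, hs, hsc⟩ := mem_image.mp (e i).2
  refine ⟨s, mem_of_mem_erase hs, ?_⟩
  show s ∈ G.geodesicBranch v (e i)
  exact hsc ▸ hroot s (ne_of_mem_erase hs)

lemma exists_walk_induce_geodesicBranch (hG : G.Connected) {v c : V} {k : ℕ}
    (hv : ∀ w, ∃ p : G.Walk v w, p.length ≤ k + 1) (hc : c ∈ G.geodesicBranch v c)
    (w : G.geodesicBranch v c) :
    ∃ p : (G.induce (G.geodesicBranch v c)).Walk ⟨c, hc⟩ w, p.length ≤ k := by
  obtain ⟨p, hlen, hp⟩ := exists_walk_of_mem_geodesicBranch hG w.2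
  obtain ⟨q, hq⟩ := hv w
  have := dist_le q
  exact ⟨p.induce _ hp, by rw [Walk.length_induce]; omega⟩

theorem Spider.nonempty_of_pow_lt_card {W : Type*} {H : SimpleGraph W} {v : W} {k t : ℕ}
    (ht : 0 < t) (hv : ∀ w, ∃ p : H.Walk v w, p.length ≤ k) (S : Finset W) (hS : t ^ k < #S) :
    Nonempty (H.Spider S t) := by
  classical
  induction k generalizing W with
  | zero =>
    have hSv : ∀ w, w = v := fun w =>
      (hv w).elim fun p hp => (Walk.eq_of_length_eq_zero (Nat.le_zero.mp hp)).symm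
    have : #S ≤ 1 := card_le_one.mpr fun a _ b _ => (hSv a).trans (hSv b).symm
    simp at hS
    omega
  | succ k ih =>
    have hG := connected_of_forall_exists_walk hv
    by_cases hheavy : ∃ c, t ^ k < #{s ∈ S | s ∈ H.geodesicBranch v c}
    · obtain ⟨c, hc⟩ := hheavy
      obtain ⟨w, hw⟩ := card_pos.mp (Nat.zero_lt_of_lt hc)
      have hcB := self_mem_geodesicBranch hG (mem_filter.mp hw).2
      obtain ⟨s⟩ := ih (exists_walk_induce_geodesicBranch hG hv hcB)
        (S.subtype (· ∈ H.geodesicBranch v c)) (by rwa [card_subtype])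
      exact ⟨s.map (Embedding.induce _) fun x hx => by simpa using hx⟩
    · push Not at hheavy
      have hS' : t ^ k * (t - 1) < #(S.erase v) := by
        have := pred_card_le_card_erase (s := S) (a := v)
        have := Nat.one_le_pow k t ht
        have := Nat.le_mul_of_pos_right (t ^ k) ht
        rw [pow_succ] at hS
        rw [Nat.mul_sub_one]
        omega
      obtain ⟨c, hc, hcS⟩ := exists_injective_geodesicBranch hG hheavy hS'
      exact ⟨Spider.ofGeodesicBranches hG v c hc hcS⟩

theorem hasMinor_completeBipartiteGraph {α β : Type*} (A : α → Set V) (L : β → Set V)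
    (hA : ∀ a, (G.induce (A a)).Connected) (hL : ∀ b, (G.induce (L b)).Connected)
    (hAA : Pairwise fun a a' => Disjoint (A a) (A a'))
    (hLL : Pairwise fun b b' => Disjoint (L b) (L b'))
    (hAL : ∀ a b, Disjoint (A a) (L b))
    (hadj : ∀ a b, ∃ x ∈ A a, ∃ y ∈ L b, G.Adj x y) :
    G.HasMinor (completeBipartiteGraph α β) := by
  refine ⟨Sum.elim A L, ?_, ?_, ?_, ?_⟩
  · rintro (a | b)
    exacts [Set.nonempty_coe_sort.mp (hA a).nonempty, Set.nonempty_coe_sort.mp (hL b).nonempty]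
  · rintro (a | b)
    exacts [hA a, hL b]
  · rintro (a | b) (a' | b') h
    · exact hAA (by simpa using h)
    · exact hAL a b'
    · exact (hAL a' b).symm
    · exact hLL (by simpa using h)
  · rintro (a | b) (a' | b') h
    · simp at h
    · exact hadj a b'
    · obtain ⟨x, hx, y, hy, hxy⟩ := hadj a' b
      exact ⟨y, hy, x, hx, hxy.symm⟩
    · simp at h

theorem Spider.hasMinor (s : G.Spider S t) {X : Set V} (hX : (G.induce X).Connected)
    (hXbody : Disjoint X s.body) (hXlegs : ∀ i, Disjoint X (s.legs i))
    (hSX : ∀ y ∈ S, ∃ x ∈ X, G.Adj x y) :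
    G.HasMinor (completeBipartiteGraph (Fin 2) (Fin t)) := by
  refine hasMinor_completeBipartiteGraph ![X, s.body] s.legs ?_ s.connected_legs ?_
    s.pairwise_disjoint_legs ?_ ?_
  · intro a
    fin_cases a
    exacts [hX, s.connected_body]
  · intro a a' h
    fin_cases a <;> fin_cases a' <;> simp_all [hXbody.symm]
  · intro a i
    fin_cases a
    exacts [hXlegs i, s.disjoint_body_legs i]
  · intro a i
    fin_cases a
    · obtain ⟨y, hyS, hy⟩ := s.exists_mem_legs i
      obtain ⟨x, hx, hxy⟩ := hSX y hyS
      exact ⟨x, hx, y, hy, hxy⟩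
    · exact s.exists_adj_legs i

theorem card_le_pow_of_not_hasMinor (ht : 0 < t)
    (hfree : ¬ G.HasMinor (completeBipartiteGraph (Fin 2) (Fin t)))
    {D X : Set V} {v : V} {k : ℕ} (hv : v ∈ D)
    (hD : ∀ w ∈ D, ∃ p : G.Walk v w, p.length ≤ k ∧ ∀ x ∈ p.support, x ∈ D)
    (hX : (G.induce X).Connected) (hXD : Disjoint X D) {S : Finset V} (hSD : ↑S ⊆ D)
    (hSX : ∀ y ∈ S, ∃ x ∈ X, G.Adj x y) : #S ≤ t ^ k := by
  classical
  by_contra! hS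
  have hrad : ∀ w : D, ∃ p : (G.induce D).Walk ⟨v, hv⟩ w, p.length ≤ k := by
    rintro ⟨w, hw⟩
    obtain ⟨p, hlen, hp⟩ := hD w hw
    exact ⟨p.induce D hp, by rwa [Walk.length_induce]⟩
  obtain ⟨s⟩ := Spider.nonempty_of_pow_lt_card ht hrad (S.subtype (· ∈ D))
    (by rwa [card_subtype, filter_true_of_mem hSD])
  have hsub : ∀ B : Set D, Disjoint X (Subtype.val '' B) :=
    fun B => hXD.mono_right (Subtype.coe_image_subset D B)
  exact hfree ((s.map (Embedding.induce D) (S' := S) fun x hx => by simpa using hx).hasMinor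
    hX (hsub _) (fun i => hsub _) hSX)

lemma ncard_edges_between_le_mul [Fintype V] {C C' : Set V} {m n : ℕ}
    (hdeg : ∀ b ∈ C', ∀ S : Finset V, ↑S ⊆ C → (∀ a ∈ S, G.Adj a b) → #S ≤ m)
    (hsee : ∀ S : Finset V, ↑S ⊆ C' → (∀ b ∈ S, ∃ a ∈ C, G.Adj a b) → #S ≤ n) :
    {e : V × V | e.1 ∈ C ∧ e.2 ∈ C' ∧ G.Adj e.1 e.2}.ncard ≤ m * n := by
  classical
  set E := {e : V × V | e.1 ∈ C ∧ e.2 ∈ C' ∧ G.Adj e.1 e.2}.toFinset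
  have hE : ∀ {e}, e ∈ E ↔ e.1 ∈ C ∧ e.2 ∈ C' ∧ G.Adj e.1 e.2 := Set.mem_toFinset
  have hfiber : ∀ b ∈ E.image Prod.snd, #{e ∈ E | e.2 = b} ≤ m := by
    intro b hb
    obtain ⟨e, he, rfl⟩ := mem_image.mp hb
    rw [← card_image_of_injOn (f := Prod.fst) fun x hx y hy h =>
      Prod.ext h ((mem_filter.mp hx).2.trans (mem_filter.mp hy).2.symm)]
    refine hdeg e.2 (hE.mp he).2.1 _ (fun a ha => ?_) fun a ha => ?_ <;>
      obtain ⟨e', he', rfl⟩ := mem_image.mp ha <;>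
      obtain ⟨he'E, he'b⟩ := mem_filter.mp he'
    exacts [(hE.mp he'E).1, he'b ▸ (hE.mp he'E).2.2]
  have himage : #(E.image Prod.snd) ≤ n := by
    refine hsee _ (fun b hb => ?_) fun b hb => ?_ <;> obtain ⟨e, he, rfl⟩ := mem_image.mp hb
    exacts [(hE.mp he).2.1, ⟨e.1, (hE.mp he).1, (hE.mp he).2.2⟩]
  calc _ = #E := Set.ncard_eq_toFinset_card' _
    _ ≤ m * #(E.image Prod.snd) := card_le_mul_card_image E _ hfiber
    _ ≤ m * n := by gcongr

end SimpleGraph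

theorem edges_between_cells_le_general {V : Type*} [Fintype V]
    (t k : ℕ) (ht : 2 ≤ t) (hk : 1 ≤ k) (G : SimpleGraph V)
    (hfree : ¬ G.HasMinor (completeBipartiteGraph (Fin 2) (Fin t)))
    (C C' : Set V) (hdisj : Disjoint C C')
    (hconn : (G.induce C).Connected)
    (hrad : ∃ vC ∈ C, ∀ w ∈ C, ∃ p : G.Walk vC w, p.length ≤ k ∧ ∀ x ∈ p.support, x ∈ C)
    (hrad' : ∃ vC' ∈ C', ∀ w ∈ C', ∃ p : G.Walk vC' w,
      p.length ≤ k ∧ ∀ x ∈ p.support, x ∈ C') :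
    {e : V × V | e.1 ∈ C ∧ e.2 ∈ C' ∧ G.Adj e.1 e.2}.ncard ≤ k ^ 2 * t ^ (2 * k * t ^ k) := by
  obtain ⟨v, hv, hD⟩ := hrad
  obtain ⟨v', hv', hD'⟩ := hrad'
  have htpos : 0 < t := by omega
  have hdeg : ∀ b ∈ C', ∀ S : Finset V, ↑S ⊆ C → (∀ a ∈ S, G.Adj a b) → #S ≤ t ^ k :=
    fun b hb S hSC hSb => card_le_pow_of_not_hasMinor htpos hfree hv hD
      (connected_induce_singleton b)
      (Set.disjoint_singleton_left.mpr fun h => Set.disjoint_left.mp hdisj h hb) hSC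
      fun a ha => ⟨b, rfl, (hSb a ha).symm⟩
  have hsee : ∀ S : Finset V, ↑S ⊆ C' → (∀ b ∈ S, ∃ a ∈ C, G.Adj a b) → #S ≤ t ^ k :=
    fun _ => card_le_pow_of_not_hasMinor htpos hfree hv' hD' hconn hdisj
  calc _ ≤ t ^ k * t ^ k := ncard_edges_between_le_mul hdeg hsee
    _ = t ^ (2 * k) := by ring
    _ ≤ t ^ (2 * k * t ^ k) :=
      Nat.pow_le_pow_right (by omega) (Nat.le_mul_of_pos_right _ (by positivity))
    _ ≤ k ^ 2 * t ^ (2 * k * t ^ k) := Nat.le_mul_of_pos_left _ (pow_pos (by omega) 2)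

/-- If `G` has no `K_{2,t}` minor (`t ≥ 2`) and `C, C'` are disjoint vertex sets, each
inducing a connected subgraph containing a vertex within distance `k` (inside the induced
subgraph) of all its vertices, then the number of edges between `C` and `C'` is at most
`k²·t^(2k·t^k)`. -/
theorem edges_between_cells_le {V : Type*} [Fintype V]
    (t k : ℕ) (ht : 2 ≤ t) (hk : 1 ≤ k) (G : SimpleGraph V)
    (hfree : ¬ G.HasMinor (completeBipartiteGraph (Fin 2) (Fin t)))
    (C C' : Set V) (hdisj : Disjoint C C')
    (hconn : (G.induce C).Connected) (hconn' : (G.induce C').Connected)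
    (hrad : ∃ vC ∈ C, ∀ w ∈ C, ∃ p : G.Walk vC w, p.length ≤ k ∧ ∀ x ∈ p.support, x ∈ C)
    (hrad' : ∃ vC' ∈ C', ∀ w ∈ C', ∃ p : G.Walk vC' w,
      p.length ≤ k ∧ ∀ x ∈ p.support, x ∈ C') :
    {e : V × V | e.1 ∈ C ∧ e.2 ∈ C' ∧ G.Adj e.1 e.2}.ncard ≤ k ^ 2 * t ^ (2 * k * t ^ k) :=
  edges_between_cells_le_general t k ht hk G hfree C C' hdisj hconn hrad hrad'
end

section
/- Let G = (V, E) be a graph, let P′ = (V_1, ..., V_l) be a partition of V, and let ∂(P′) be the set of vertices having a neighbor in a different part. Let M be a minimum distance-k dominating set of G. For each i, let Q_i ⊆ V_i be a minimum-size set such that Q_i ∪ (∂(P′) ∩ V_i) distance-k dominates V_i in G. Then Q := ∂(P′) ∪ ⋃_i Q_i is a distance-k dominating set of G with |Q| ≤ |∂(P′)| + |M|. -/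
open SimpleGraph

def KDominates {V : Type*} (G : SimpleGraph V) (k : ℕ) (D S : Set V) : Prop :=
  ∀ v ∈ S, ∃ d ∈ D, ∃ p : G.Walk d v, p.length ≤ k

/-!
Domination of all of `V` is immediate, since every vertex lies in some part `V_i`. For the bound,
a walk of length at most `k` from `M` to a vertex `w ∈ V_i` either starts in `V_i` or enters
`V_i` through a boundary vertex, which is then at distance at most `k` from `w`. So
`(M ∩ V_i) ∪ (∂ ∩ V_i)` distance-`k` dominates `V_i`, whence `|Q_i| ≤ |M ∩ V_i|` by minimality,
and summing over the parts gives `|⋃ Q_i| ≤ |M|`.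
-/

theorem Set.sum_ncard_inter_fiber {α ι : Type*} [Fintype ι] (f : α → ι) {s : Set α}
    (hs : s.Finite) : ∑ i, (s ∩ {a | f a = i}).ncard = s.ncard := by
  have hdisj : Pairwise fun i j => Disjoint (s ∩ {a | f a = i}) (s ∩ {a | f a = j}) :=
    fun _ _ hij => Set.disjoint_left.2 fun a ha hb => hij (ha.2.symm.trans hb.2)
  have hcover : (⋃ i, s ∩ {a | f a = i}) = s := by
    ext a; simp
  rw [← finsum_eq_sum_of_fintype, ← Set.ncard_iUnion_of_finite (fun _ => hs.inter_of_left _)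
    hdisj, hcover]

namespace SimpleGraph.Walk

variable {V : Type*} {G : SimpleGraph V}

theorem exists_boundary_walk_of_notMem {S : Set V} {d w : V} (p : G.Walk d w) (hw : w ∈ S)
    (hd : d ∉ S) : ∃ b ∈ S, (∃ u, G.Adj b u ∧ u ∉ S) ∧ ∃ q : G.Walk b w, q.length ≤ p.length := by
  induction p with
  | nil => exact absurd hw hd
  | @cons d x w hdx q ih =>
    by_cases hx : x ∈ S
    · exact ⟨x, hx, ⟨d, hdx.symm, hd⟩, q, by simp⟩
    · obtain ⟨b, hb, hbd, q', hq'⟩ := ih hw hx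
      exact ⟨b, hb, hbd, q', hq'.trans (by simp)⟩

end SimpleGraph.Walk

namespace KDominates

variable {V : Type*} {G : SimpleGraph V} {k : ℕ} {D S : Set V}

theorem mono_left {D' : Set V} (h : KDominates G k D S) (hD : D ⊆ D') :
    KDominates G k D' S := fun v hv =>
  let ⟨d, hd, p, hp⟩ := h v hv
  ⟨d, hD hd, p, hp⟩

theorem inter_union_boundary (h : KDominates G k D S) {B : Set V}
    (hB : ∀ b ∈ S, (∃ u, G.Adj b u ∧ u ∉ S) → b ∈ B) :
    KDominates G k (D ∩ S ∪ B ∩ S) S := by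
  intro w hw
  obtain ⟨d, hd, p, hp⟩ := h w hw
  by_cases hdS : d ∈ S
  · exact ⟨d, Or.inl ⟨hd, hdS⟩, p, hp⟩
  · obtain ⟨b, hbS, hbB, q, hq⟩ := p.exists_boundary_walk_of_notMem hw hdS
    exact ⟨b, Or.inr ⟨hB b hbS hbB, hbS⟩, q, hq.trans hp⟩

end KDominates

theorem boundary_union_local_solutions_general {V : Type*} [Fintype V]
    (G : SimpleGraph V) (k l : ℕ)
    (part : V → Fin l)
    (M : Set V) (hM : KDominates G k M Set.univ)
    (B : Set V) (hB : B = {v : V | ∃ w, G.Adj v w ∧ part w ≠ part v})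
    (Q : Fin l → Set V)
    (hQdom : ∀ i, KDominates G k (Q i ∪ (B ∩ {v | part v = i})) {v | part v = i})
    (hQmin : ∀ i, ∀ Q' : Set V, Q' ⊆ {v | part v = i} →
      KDominates G k (Q' ∪ (B ∩ {v | part v = i})) {v | part v = i} →
      (Q i).ncard ≤ Q'.ncard) :
    KDominates G k (B ∪ ⋃ i, Q i) Set.univ ∧
      (B ∪ ⋃ i, Q i).ncard ≤ B.ncard + M.ncard := by
  have hMlocal (i : Fin l) :
      KDominates G k (M ∩ {v | part v = i} ∪ B ∩ {v | part v = i}) {v | part v = i} :=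
    KDominates.inter_union_boundary (fun v _ => hM v trivial) fun b hb ⟨u, hbu, hu⟩ =>
      hB ▸ ⟨u, hbu, fun h => hu (h.trans hb)⟩
  refine ⟨fun v _ => (hQdom (part v)).mono_left ?_ v rfl, ?_⟩
  · exact Set.union_subset (Set.subset_union_of_subset_right (Set.subset_iUnion Q _) _)
      (Set.inter_subset_left.trans Set.subset_union_left)
  calc (B ∪ ⋃ i, Q i).ncard ≤ B.ncard + (⋃ i, Q i).ncard := Set.ncard_union_le _ _
    _ ≤ B.ncard + ∑ i, (Q i).ncard := by grw [Set.ncard_iUnion_le_of_fintype Q]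
    _ ≤ B.ncard + ∑ i, (M ∩ {v | part v = i}).ncard :=
      Nat.add_le_add_left (Finset.sum_le_sum fun i _ =>
        hQmin i _ Set.inter_subset_right (hMlocal i)) _
    _ = B.ncard + M.ncard := by rw [Set.sum_ncard_inter_fiber part M.toFinite]

/-- Given a partition `(V_1, …, V_l)` of `V(G)` with boundary `∂`, a minimum distance-`k`
dominating set `M`, and for each part a minimum set `Q_i ⊆ V_i` such that
`Q_i ∪ (∂ ∩ V_i)` distance-`k` dominates `V_i`, the set `Q = ∂ ∪ ⋃_i Q_i` is a
distance-`k` dominating set of `G` of size at most `|∂| + |M|`. -/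
theorem boundary_union_local_solutions {V : Type*} [Fintype V]
    (G : SimpleGraph V) (k l : ℕ) (hl : 1 ≤ l)
    (part : V → Fin l)
    (M : Set V) (hM : KDominates G k M Set.univ)
    (hMmin : ∀ D : Set V, KDominates G k D Set.univ → M.ncard ≤ D.ncard)
    (B : Set V) (hB : B = {v : V | ∃ w, G.Adj v w ∧ part w ≠ part v})
    (Q : Fin l → Set V)
    (hQsub : ∀ i, Q i ⊆ {v | part v = i})
    (hQdom : ∀ i, KDominates G k (Q i ∪ (B ∩ {v | part v = i})) {v | part v = i})
    (hQmin : ∀ i, ∀ Q' : Set V, Q' ⊆ {v | part v = i} →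
      KDominates G k (Q' ∪ (B ∩ {v | part v = i})) {v | part v = i} →
      (Q i).ncard ≤ Q'.ncard) :
    KDominates G k (B ∪ ⋃ i, Q i) Set.univ ∧
      (B ∪ ⋃ i, Q i).ncard ≤ B.ncard + M.ncard :=
  boundary_union_local_solutions_general G k l part M hM B hB Q hQdom hQmin
end
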